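/- arXiv:1307.4304 — 2 statements merged into one kernel-verified Lean document; each statement's English description precedes it below -/
import Mathlib

section
/- Let A and B be k-algebras, P an A-bimodule, and suppose: (i) every square-zero extension of any algebra by a bimodule N admits liftings of algebra maps from A (i.e. H²(A,N) = 0 for the relevant N), and (ii) P is projective relative to surjections of A-bimodules with kernel N. Then every square-zero extension p : E → T_A(P) of the tensor algebra T_A(P) with kernel N admits an algebra splitting σ : T_A(P) → E with p∘σ = id. -/
/-!
Lift `ιA` through `p` to an algebra map `g : A → E` using `H²(A, N) = 0`. Through `g`, the
extension `p` becomes a surjection of `A`-bimodules with kernel `N`, so relative projectivity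
lifts `ιP` to a bimodule map `ψ : P → E`. The universal property of `T_A(P)` turns `(g, ψ)` into
an algebra map `σ : T_A(P) → E`, and its uniqueness clause, applied to `p ∘ σ` and the identity,
gives `p ∘ σ = id`.
-/

open MulOpposite

def IsRelativelyProjective (k A N P : Type) [CommRing k] [Ring A] [Algebra k A]
    [AddCommGroup N] [Module k N] [Module A N] [Module Aᵐᵒᵖ N]
    [AddCommGroup P] [Module k P] [Module A P] [Module Aᵐᵒᵖ P] : Prop :=
  ∀ (X Y : Type) [AddCommGroup X] [Module k X] [Module A X] [Module Aᵐᵒᵖ X]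
    [AddCommGroup Y] [Module k Y] [Module A Y] [Module Aᵐᵒᵖ Y]
    (q : X →ₗ[k] Y),
    (∀ (a : A) (x : X), q (a • x) = a • q x) →
    (∀ (a : A) (x : X), q (op a • x) = op a • q x) →
    Function.Surjective q →
    ∀ j : N →ₗ[k] X, Function.Injective j →
    (∀ (a : A) (nn : N), j (a • nn) = a • j nn) →
    (∀ (a : A) (nn : N), j (op a • nn) = op a • j nn) →
    (∀ x : X, q x = 0 ↔ ∃ nn : N, j nn = x) →
    ∀ φ : P →ₗ[k] Y,
    (∀ (a : A) (x : P), φ (a • x) = a • φ x) →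
    (∀ (a : A) (x : P), φ (op a • x) = op a • φ x) →
    ∃ ψ : P →ₗ[k] X,
      (∀ (a : A) (x : P), ψ (a • x) = a • ψ x) ∧
      (∀ (a : A) (x : P), ψ (op a • x) = op a • ψ x) ∧
      q.comp ψ = φ

theorem IsRelativelyProjective.exists_lift {k A N P : Type} [CommRing k] [Ring A]
    [Algebra k A] [AddCommGroup N] [Module k N] [Module A N] [Module Aᵐᵒᵖ N]
    [AddCommGroup P] [Module k P] [Module A P] [Module Aᵐᵒᵖ P]
    (hP : IsRelativelyProjective k A N P)
    {E T : Type} [Ring E] [Algebra k E] [Ring T] [Algebra k T]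
    (p : E →ₐ[k] T) (hsurj : Function.Surjective p)
    (i : N →ₗ[k] E) (hinj : Function.Injective i) (hker : ∀ e : E, p e = 0 ↔ ∃ nn : N, i nn = e)
    (g : A →ₐ[k] E) (hil : ∀ (a : A) (nn : N), i (a • nn) = g a * i nn)
    (hir : ∀ (a : A) (nn : N), i (op a • nn) = i nn * g a)
    (φ : P →ₗ[k] T) (hφl : ∀ (a : A) (x : P), φ (a • x) = p (g a) * φ x)
    (hφr : ∀ (a : A) (x : P), φ (op a • x) = φ x * p (g a)) :
    ∃ ψ : P →ₗ[k] E, (∀ (a : A) (x : P), ψ (a • x) = g a * ψ x) ∧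
      (∀ (a : A) (x : P), ψ (op a • x) = ψ x * g a) ∧ p.toLinearMap.comp ψ = φ := by
  let _ : Module A E := Module.compHom E g.toRingHom
  let _ : Module Aᵐᵒᵖ E := Module.compHom E g.toRingHom.op
  let _ : Module A T := Module.compHom T (p.comp g).toRingHom
  let _ : Module Aᵐᵒᵖ T := Module.compHom T (p.comp g).toRingHom.op
  exact hP E T p.toLinearMap (fun a e ↦ map_mul p (g a) e) (fun a e ↦ map_mul p e (g a))
    hsurj i hinj hil hir hker φ hφl hφr

theorem stmt10_general (k : Type) [Field k]
    (A : Type) [Ring A] [Algebra k A]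
    (P : Type) [AddCommGroup P] [Module k P] [Module A P] [Module Aᵐᵒᵖ P]
    (N : Type) [AddCommGroup N] [Module k N] [Module A N] [Module Aᵐᵒᵖ N]
    (T : Type) [Ring T] [Algebra k T]
    (ιA : A →ₐ[k] T) (ιP : P →ₗ[k] T)
    (hιl : ∀ (a : A) (x : P), ιP (a • x) = ιA a * ιP x)
    (hιr : ∀ (a : A) (x : P), ιP (op a • x) = ιP x * ιA a)
    (hUniv : ∀ (E' : Type) [Ring E'] [Algebra k E']
      (g : A →ₐ[k] E') (φ : P →ₗ[k] E'),
      (∀ (a : A) (x : P), φ (a • x) = g a * φ x) →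
      (∀ (a : A) (x : P), φ (op a • x) = φ x * g a) →
      ∃! G : T →ₐ[k] E', G.comp ιA = g ∧ ∀ x : P, G (ιP x) = φ x)
    -- (i): `H²(A, N) = 0`, as a lifting property through square-zero
    -- extensions with kernel (isomorphic to) the `A`-bimodule `N`.
    (hA : ∀ (E' B' : Type) [Ring E'] [Algebra k E'] [Ring B'] [Algebra k B']
      (p' : E' →ₐ[k] B'), Function.Surjective p' →
      (∀ x y : E', p' x = 0 → p' y = 0 → x * y = 0) →
      ∀ i' : N →ₗ[k] E', Function.Injective i' →
      (∀ e : E', p' e = 0 ↔ ∃ nn : N, i' nn = e) →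
      ∀ f : A →ₐ[k] B',
      (∀ (a : A) (nn : N) (e : E'), p' e = f a →
        e * i' nn = i' (a • nn) ∧ i' nn * e = i' (op a • nn)) →
      ∃ fbar : A →ₐ[k] E', p'.comp fbar = f)
    -- (ii): `P` is projective relative to surjections of `A`-bimodules
    -- with kernel `N`.
    (hP : ∀ (X Y : Type) [AddCommGroup X] [Module k X] [Module A X] [Module Aᵐᵒᵖ X]
      [AddCommGroup Y] [Module k Y] [Module A Y] [Module Aᵐᵒᵖ Y]
      (q : X →ₗ[k] Y),
      (∀ (a : A) (x : X), q (a • x) = a • q x) →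
      (∀ (a : A) (x : X), q (op a • x) = op a • q x) →
      Function.Surjective q →
      ∀ j : N →ₗ[k] X, Function.Injective j →
      (∀ (a : A) (nn : N), j (a • nn) = a • j nn) →
      (∀ (a : A) (nn : N), j (op a • nn) = op a • j nn) →
      (∀ x : X, q x = 0 ↔ ∃ nn : N, j nn = x) →
      ∀ φ : P →ₗ[k] Y,
      (∀ (a : A) (x : P), φ (a • x) = a • φ x) →
      (∀ (a : A) (x : P), φ (op a • x) = op a • φ x) →
      ∃ ψ : P →ₗ[k] X,
        (∀ (a : A) (x : P), ψ (a • x) = a • ψ x) ∧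
        (∀ (a : A) (x : P), ψ (op a • x) = op a • ψ x) ∧
        q.comp ψ = φ)
    -- the square-zero extension of `T_A(P)` with kernel `N`:
    (E : Type) [Ring E] [Algebra k E]
    (p : E →ₐ[k] T) (hsurj : Function.Surjective p)
    (hsq : ∀ x y : E, p x = 0 → p y = 0 → x * y = 0)
    (i : N →ₗ[k] E) (hinj : Function.Injective i)
    (hker : ∀ e : E, p e = 0 ↔ ∃ nn : N, i nn = e)
    (hcompat : ∀ (a : A) (nn : N) (e : E), p e = ιA a →
      e * i nn = i (a • nn) ∧ i nn * e = i (op a • nn)) :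
    ∃ σ : T →ₐ[k] E, p.comp σ = AlgHom.id k T := by
  obtain ⟨g, hg⟩ := hA E T p hsurj hsq i hinj hker ιA hcompat
  have hpg (a : A) : p (g a) = ιA a := DFunLike.congr_fun hg a
  obtain ⟨ψ, hψl, hψr, hpψ⟩ := IsRelativelyProjective.exists_lift (P := P) hP p hsurj i hinj hker
    g (fun a nn ↦ (hcompat a nn (g a) (hpg a)).1.symm)
    (fun a nn ↦ (hcompat a nn (g a) (hpg a)).2.symm) ιP
    (fun a x ↦ by rw [hpg, hιl]) (fun a x ↦ by rw [hpg, hιr])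
  obtain ⟨σ, ⟨hσA, hσP⟩, -⟩ := hUniv E g ψ hψl hψr
  refine ⟨σ, (hUniv T ιA ιP hιl hιr).unique ⟨?_, fun x ↦ ?_⟩ ⟨rfl, fun _ ↦ rfl⟩⟩
  · rw [AlgHom.comp_assoc, hσA, hg]
  · exact (congrArg p (hσP x)).trans (LinearMap.congr_fun hpψ x)

/-- Let `A` be a `k`-algebra, `P` an `A`-bimodule, and `T = T_A(P)`
the tensor algebra of `P` over `A`, encoded by its universal property (`hUniv`).
Assume (i) algebra maps from `A` lift through every square-zero extension with
kernel the `A`-bimodule `N` (`H²(A,N) = 0`), and (ii) `P` is projective relative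
to surjections of `A`-bimodules with kernel `N`.  Then every square-zero
extension `p : E → T_A(P)` with kernel `N` admits an algebra splitting
`σ : T_A(P) → E` with `p ∘ σ = id`. -/
theorem stmt10 (k : Type) [Field k]
    (A : Type) [Ring A] [Algebra k A]
    (P : Type) [AddCommGroup P] [Module k P] [Module A P] [Module Aᵐᵒᵖ P]
    [SMulCommClass A Aᵐᵒᵖ P] [IsScalarTower k A P] [IsScalarTower k Aᵐᵒᵖ P]
    (N : Type) [AddCommGroup N] [Module k N] [Module A N] [Module Aᵐᵒᵖ N]
    [SMulCommClass A Aᵐᵒᵖ N] [IsScalarTower k A N] [IsScalarTower k Aᵐᵒᵖ N]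
    (T : Type) [Ring T] [Algebra k T]
    (ιA : A →ₐ[k] T) (ιP : P →ₗ[k] T)
    (hιl : ∀ (a : A) (x : P), ιP (a • x) = ιA a * ιP x)
    (hιr : ∀ (a : A) (x : P), ιP (op a • x) = ιP x * ιA a)
    (hUniv : ∀ (E' : Type) [Ring E'] [Algebra k E']
      (g : A →ₐ[k] E') (φ : P →ₗ[k] E'),
      (∀ (a : A) (x : P), φ (a • x) = g a * φ x) →
      (∀ (a : A) (x : P), φ (op a • x) = φ x * g a) →
      ∃! G : T →ₐ[k] E', G.comp ιA = g ∧ ∀ x : P, G (ιP x) = φ x)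
    -- (i): `H²(A, N) = 0`, as a lifting property through square-zero
    -- extensions with kernel (isomorphic to) the `A`-bimodule `N`.
    (hA : ∀ (E' B' : Type) [Ring E'] [Algebra k E'] [Ring B'] [Algebra k B']
      (p' : E' →ₐ[k] B'), Function.Surjective p' →
      (∀ x y : E', p' x = 0 → p' y = 0 → x * y = 0) →
      ∀ i' : N →ₗ[k] E', Function.Injective i' →
      (∀ e : E', p' e = 0 ↔ ∃ nn : N, i' nn = e) →
      ∀ f : A →ₐ[k] B',
      (∀ (a : A) (nn : N) (e : E'), p' e = f a →
        e * i' nn = i' (a • nn) ∧ i' nn * e = i' (op a • nn)) →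
      ∃ fbar : A →ₐ[k] E', p'.comp fbar = f)
    -- (ii): `P` is projective relative to surjections of `A`-bimodules
    -- with kernel `N`.
    (hP : ∀ (X Y : Type) [AddCommGroup X] [Module k X] [Module A X] [Module Aᵐᵒᵖ X]
      [AddCommGroup Y] [Module k Y] [Module A Y] [Module Aᵐᵒᵖ Y]
      (q : X →ₗ[k] Y),
      (∀ (a : A) (x : X), q (a • x) = a • q x) →
      (∀ (a : A) (x : X), q (op a • x) = op a • q x) →
      Function.Surjective q →
      ∀ j : N →ₗ[k] X, Function.Injective j →
      (∀ (a : A) (nn : N), j (a • nn) = a • j nn) →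
      (∀ (a : A) (nn : N), j (op a • nn) = op a • j nn) →
      (∀ x : X, q x = 0 ↔ ∃ nn : N, j nn = x) →
      ∀ φ : P →ₗ[k] Y,
      (∀ (a : A) (x : P), φ (a • x) = a • φ x) →
      (∀ (a : A) (x : P), φ (op a • x) = op a • φ x) →
      ∃ ψ : P →ₗ[k] X,
        (∀ (a : A) (x : P), ψ (a • x) = a • ψ x) ∧
        (∀ (a : A) (x : P), ψ (op a • x) = op a • ψ x) ∧
        q.comp ψ = φ)
    -- the square-zero extension of `T_A(P)` with kernel `N`:
    (E : Type) [Ring E] [Algebra k E]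
    (p : E →ₐ[k] T) (hsurj : Function.Surjective p)
    (hsq : ∀ x y : E, p x = 0 → p y = 0 → x * y = 0)
    (i : N →ₗ[k] E) (hinj : Function.Injective i)
    (hker : ∀ e : E, p e = 0 ↔ ∃ nn : N, i nn = e)
    (hcompat : ∀ (a : A) (nn : N) (e : E), p e = ιA a →
      e * i nn = i (a • nn) ∧ i nn * e = i (op a • nn)) :
    ∃ σ : T →ₐ[k] E, p.comp σ = AlgHom.id k T :=
  stmt10_general k A P N T ιA ιP hιl hιr hUniv hA hP E p hsurj hsq i hinj hker hcompat
end

section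
/- Let k be a field, S a k-algebra such that H^i(S, N) = 0 for all i = 1, 2 and all S-bimodules N (e.g. S separable), and A a k-algebra such that every square-zero extension of any algebra by a given bimodule M splits relative to maps from A. Given a square-zero extension p : E → S ⊗ A with kernel N that is also an S-bimodule via a lifting, and given that the S-invariants functor is exact on this extension (using H¹(S,N) = 0), the induced sequence 0 → N^S → E^S → (S ⊗ A)^S → 0 is a square-zero extension of k-algebras, where L^S = {l ∈ L : sl = ls for all s ∈ S}. -/
open MulOpposite TensorProduct

/-! Lift `b` to any `e` with `p e = b`. Since `b` commutes with `p ∘ u`, the defect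
`s ↦ u s * e - e * u s` is a derivation of `S` into the kernel of `p`, an `S`-bimodule through
`u`. By `H¹ = 0` it equals `s ↦ u s * n - n * u s` for some `n` in the kernel, and `e - n` is a lift
of `b` centralizing `u`. -/

-- `H¹(S, N) = 0` for the `S`-bimodule `N`.
def DerivationsAreInner (k S N : Type*) [CommRing k] [Ring S] [Algebra k S] [AddCommGroup N]
    [Module k N] [Module S N] [Module Sᵐᵒᵖ N] : Prop :=
  ∀ d : S →ₗ[k] N, (∀ s t : S, d (s * t) = s • d t + op t • d s) →
    ∃ n : N, ∀ s : S, d s = s • n - op s • n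

section KernelBimodule

variable {k S E B : Type*} [CommRing k] [Ring S] [Algebra k S] [Ring E] [Algebra k E]
  [Ring B] [Algebra k B]

/-- The kernel of `p`, an `S`-bimodule through `u` by multiplication in `E`. -/
def LiftedKer (p : E →ₐ[k] B) (_u : S →ₐ[k] E) : Type _ := RingHom.ker p

namespace LiftedKer

variable {p : E →ₐ[k] B} {u : S →ₐ[k] E}

instance : AddCommGroup (LiftedKer p u) := inferInstanceAs (AddCommGroup (RingHom.ker p))

instance : Module k (LiftedKer p u) := inferInstanceAs (Module k (RingHom.ker p))

variable (p u) in
def val : LiftedKer p u →ₗ[k] E := (RingHom.ker p).subtype.restrictScalars k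

theorem val_injective : Function.Injective (val p u) := Subtype.val_injective

@[simp]
theorem map_val (n : LiftedKer p u) : p (val p u n) = 0 := n.2

variable (u) in
def mk (x : E) (hx : p x = 0) : LiftedKer p u := ⟨x, hx⟩

@[simp]
theorem val_mk (x : E) (hx : p x = 0) : val p u (mk u x hx) = x := rfl

instance : SMul S (LiftedKer p u) := ⟨fun s n => mk u (u s * val p u n) (by simp)⟩

instance : SMul Sᵐᵒᵖ (LiftedKer p u) := ⟨fun s n => mk u (val p u n * u s.unop) (by simp)⟩

@[simp]
theorem val_smul (s : S) (n : LiftedKer p u) : val p u (s • n) = u s * val p u n := rfl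

@[simp]
theorem val_op_smul (s : Sᵐᵒᵖ) (n : LiftedKer p u) : val p u (s • n) = val p u n * u s.unop :=
  rfl

instance : Module S (LiftedKer p u) where
  one_smul n := val_injective (by simp)
  mul_smul s t n := val_injective (by simp [mul_assoc])
  smul_zero s := val_injective (by simp)
  smul_add s m n := val_injective (by simp [mul_add])
  add_smul s t n := val_injective (by simp [add_mul])
  zero_smul n := val_injective (by simp)

instance : Module Sᵐᵒᵖ (LiftedKer p u) where
  one_smul n := val_injective (by simp)
  mul_smul s t n := val_injective (by simp [mul_assoc])
  smul_zero s := val_injective (by simp)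
  smul_add s m n := val_injective (by simp [add_mul])
  add_smul s t n := val_injective (by simp [mul_add])
  zero_smul n := val_injective (by simp)

instance : SMulCommClass S Sᵐᵒᵖ (LiftedKer p u) :=
  ⟨fun s t n => val_injective (by simp [mul_assoc])⟩

instance : IsScalarTower k S (LiftedKer p u) :=
  ⟨fun c s n => val_injective (by simp)⟩

instance : IsScalarTower k Sᵐᵒᵖ (LiftedKer p u) :=
  ⟨fun c s n => val_injective (by simp)⟩

end LiftedKer

open LiftedKer

variable {p : E →ₐ[k] B} {u : S →ₐ[k] E}

def commutatorDerivation (e : E) (he : ∀ s, Commute (p (u s)) (p e)) :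
    S →ₗ[k] LiftedKer p u where
  toFun s := mk u (u s * e - e * u s) (by simp [(he s).eq])
  map_add' s t := val_injective (by simp only [map_add, val_mk, add_mul, mul_add]; abel)
  map_smul' c s := val_injective (by simp [smul_sub])

@[simp]
theorem val_commutatorDerivation (e : E) (he : ∀ s, Commute (p (u s)) (p e)) (s : S) :
    val p u (commutatorDerivation e he s) = u s * e - e * u s :=
  rfl

theorem commutatorDerivation_mul (e : E) (he : ∀ s, Commute (p (u s)) (p e)) (s t : S) :
    commutatorDerivation e he (s * t) =
      s • commutatorDerivation e he t + op t • commutatorDerivation e he s :=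
  val_injective <| by
    simp only [map_mul, map_add, val_commutatorDerivation, val_smul, val_op_smul, unop_op]
    noncomm_ring

theorem exists_commute_and_eq_of_derivationsAreInner (hp : Function.Surjective p)
    (hH1 : DerivationsAreInner k S (LiftedKer p u)) (b : B) (hb : ∀ s, Commute (p (u s)) b) :
    ∃ e, (∀ s, Commute (u s) e) ∧ p e = b := by
  obtain ⟨e, rfl⟩ := hp b
  obtain ⟨n, hn⟩ := hH1 _ (commutatorDerivation_mul e hb)
  refine ⟨e - val p u n, fun s => ?_, by simp⟩
  have hcomm : u s * e - e * u s = u s * val p u n - val p u n * u s := by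
    simpa using congrArg (val p u) (hn s)
  rw [← sub_eq_zero] at hcomm
  rw [Commute, SemiconjBy, ← sub_eq_zero, ← hcomm]
  noncomm_ring

end KernelBimodule

theorem stmt17_general (k S A E : Type) [Field k] [Ring S] [Algebra k S]
    [Ring A] [Algebra k A] [Ring E] [Algebra k E]
    (hH1 : ∀ (N : Type) [AddCommGroup N] [Module k N] [Module S N] [Module Sᵐᵒᵖ N]
      [SMulCommClass S Sᵐᵒᵖ N] [IsScalarTower k S N] [IsScalarTower k Sᵐᵒᵖ N],
      ∀ d : S →ₗ[k] N, (∀ s t : S, d (s * t) = s • d t + op t • d s) →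
        ∃ n : N, ∀ s : S, d s = s • n - op s • n)
    (p : E →ₐ[k] S ⊗[k] A) (hsurj : Function.Surjective p)
    (hsq : ∀ x y : E, p x = 0 → p y = 0 → x * y = 0)
    (u : S →ₐ[k] E)
    (hu : ∀ s : S, p (u s) = s ⊗ₜ[k] (1 : A)) :
    ((1 : E) ∈ {e : E | ∀ s : S, u s * e = e * u s}) ∧
    (∀ e e' : E, (∀ s, u s * e = e * u s) → (∀ s, u s * e' = e' * u s) →
      (∀ s, u s * (e * e') = (e * e') * u s) ∧
      (∀ s, u s * (e + e') = (e + e') * u s)) ∧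
    (∀ e : E, (∀ s, u s * e = e * u s) →
      ∀ s : S, (s ⊗ₜ[k] (1 : A)) * p e = p e * (s ⊗ₜ[k] (1 : A))) ∧
    (∀ b : S ⊗[k] A,
      (∀ s : S, (s ⊗ₜ[k] (1 : A)) * b = b * (s ⊗ₜ[k] (1 : A))) →
      ∃ e : E, (∀ s, u s * e = e * u s) ∧ p e = b) ∧
    (∀ e e' : E, (∀ s, u s * e = e * u s) → (∀ s, u s * e' = e' * u s) →
      p e = 0 → p e' = 0 → e * e' = 0) :=
  ⟨fun _ => Commute.one_right _,
    fun _ _ he he' => ⟨fun s => Commute.mul_right (he s) (he' s),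
      fun s => Commute.add_right (he s) (he' s)⟩,
    fun _ he s => hu s ▸ Commute.map (he s) p,
    fun b hb => exists_commute_and_eq_of_derivationsAreInner hsurj (hH1 _) b
      fun s => (hu s).symm ▸ hb s,
    fun e e' _ _ => hsq e e'⟩

/-- Let `S` be a `k`-algebra with `H¹(S,N) = H²(S,N) = 0` for all
`S`-bimodules `N` (every derivation is inner, every 2-cocycle is a coboundary),
and let `A` be a `k`-algebra such that algebra maps from `A` lift through all
square-zero extensions.  Given a square-zero extension `p : E → S ⊗ A` together
with an algebra lifting `u : S → E` of `s ↦ s ⊗ 1` (making everything into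
`S`-bimodules), the induced sequence of `S`-centralizers
`0 → N^S → E^S → (S ⊗ A)^S → 0` is again a square-zero extension of `k`-algebras:
`E^S` is a subalgebra sent by `p` into `(S ⊗ A)^S`, the restriction of `p` is
surjective onto `(S ⊗ A)^S`, and its kernel `N^S = ker p ∩ E^S` squares to zero. -/
theorem stmt17 (k S A E : Type) [Field k] [Ring S] [Algebra k S]
    [Ring A] [Algebra k A] [Ring E] [Algebra k E]
    (hH1 : ∀ (N : Type) [AddCommGroup N] [Module k N] [Module S N] [Module Sᵐᵒᵖ N]
      [SMulCommClass S Sᵐᵒᵖ N] [IsScalarTower k S N] [IsScalarTower k Sᵐᵒᵖ N],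
      ∀ d : S →ₗ[k] N, (∀ s t : S, d (s * t) = s • d t + op t • d s) →
        ∃ n : N, ∀ s : S, d s = s • n - op s • n)
    (hH2 : ∀ (N : Type) [AddCommGroup N] [Module k N] [Module S N] [Module Sᵐᵒᵖ N]
      [SMulCommClass S Sᵐᵒᵖ N] [IsScalarTower k S N] [IsScalarTower k Sᵐᵒᵖ N],
      ∀ ω : S →ₗ[k] S →ₗ[k] N,
        (∀ s t r : S, s • ω t r - ω (s * t) r + ω s (t * r) - op r • ω s t = 0) →
        ∃ h : S →ₗ[k] N, ∀ s t : S, ω s t = s • h t - h (s * t) + op t • h s)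
    (hA : ∀ (E' B' : Type) [Ring E'] [Algebra k E'] [Ring B'] [Algebra k B']
      (p' : E' →ₐ[k] B'), Function.Surjective p' →
      (∀ x y : E', p' x = 0 → p' y = 0 → x * y = 0) →
      ∀ f : A →ₐ[k] B', ∃ fbar : A →ₐ[k] E', p'.comp fbar = f)
    (p : E →ₐ[k] S ⊗[k] A) (hsurj : Function.Surjective p)
    (hsq : ∀ x y : E, p x = 0 → p y = 0 → x * y = 0)
    (u : S →ₐ[k] E)
    (hu : ∀ s : S, p (u s) = s ⊗ₜ[k] (1 : A)) :
    ((1 : E) ∈ {e : E | ∀ s : S, u s * e = e * u s}) ∧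
    (∀ e e' : E, (∀ s, u s * e = e * u s) → (∀ s, u s * e' = e' * u s) →
      (∀ s, u s * (e * e') = (e * e') * u s) ∧
      (∀ s, u s * (e + e') = (e + e') * u s)) ∧
    (∀ e : E, (∀ s, u s * e = e * u s) →
      ∀ s : S, (s ⊗ₜ[k] (1 : A)) * p e = p e * (s ⊗ₜ[k] (1 : A))) ∧
    (∀ b : S ⊗[k] A,
      (∀ s : S, (s ⊗ₜ[k] (1 : A)) * b = b * (s ⊗ₜ[k] (1 : A))) →
      ∃ e : E, (∀ s, u s * e = e * u s) ∧ p e = b) ∧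
    (∀ e e' : E, (∀ s, u s * e = e * u s) → (∀ s, u s * e' = e' * u s) →
      p e = 0 → p e' = 0 → e * e' = 0) :=
  stmt17_general k S A E hH1 p hsurj hsq u hu
end
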